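/- Let x = (x₁, x₂) ∈ ℝ^{d₁+d₂} follow an Angular Gaussian distribution AG_d(μ, Σ) with density f(x) = B · det(Σ)^{-1/2} · [(x - μ)ᵀ Σ⁻¹ (x - μ)]^{-d/2}. Then the conditional density of x₂ given x₁ (with x₁ ≠ μ₁) is proportional, as a function of x₂, to det(Σ₂₂.₁)^{-1/2} · [1 + (x₂ - μ₂.₁)ᵀ Σ₂₂.₁⁻¹ (x₂ - μ₂.₁) / q₁]^{-d/2} where q₁ = (x₁ - μ₁)ᵀ Σ₁₁⁻¹ (x₁ - μ₁); that is, x₂ | x₁ follows a multivariate t-distribution with ν = d₁ degrees of freedom, location μ₂.₁ = μ₂ + Σ₂₁ Σ₁₁⁻¹ (x₁ - μ₁), and scale matrix (q₁/d₁) · Σ₂₂.₁. -/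

import Mathlib

/-!
Write `u = x₁ - μ₁`, `v = x₂ - μ₂` and `S = Σ₂₂.₁`. Inverting `Σ` blockwise through its Schur
complement splits the quadratic form as `(u, v)ᵀ Σ⁻¹ (u, v) = q₁ + wᵀ S⁻¹ w` with
`w = v - Σ₂₁ Σ₁₁⁻¹ u = x₂ - μ₂.₁`, so that
`(q₁ + wᵀ S⁻¹ w)^(-d/2) = q₁^(-d/2) (1 + wᵀ S⁻¹ w / q₁)^(-d/2)`.
Together with `det Σ = det Σ₁₁ · det S` this exhibits `f(x₁, ·)` as a constant multiple of the
t-density. Positive definiteness of `Σ` passes to `Σ₁₁` and to `S`, which makes `q₁` positive and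
all the real powers well behaved.
-/

open Matrix

theorem Matrix.PosDef.of_fromBlocks₁₁ {R m n : Type*} [Ring R] [PartialOrder R] [StarRing R]
    {A : Matrix m m R} {B : Matrix m n R} {C : Matrix n m R} {D : Matrix n n R}
    (h : (fromBlocks A B C D).PosDef) : A.PosDef :=
  h.submatrix Sum.inl_injective

open scoped ComplexOrder in
theorem Matrix.PosDef.schurComplement_of_fromBlocks {𝕜 m n : Type*} [RCLike 𝕜]
    [Fintype m] [Fintype n] [DecidableEq m] [DecidableEq n] {A : Matrix m m 𝕜} {B : Matrix m n 𝕜} {D : Matrix n n 𝕜}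
    (h : (fromBlocks A B Bᴴ D).PosDef) : (D - Bᴴ * A⁻¹ * B).PosDef := by
  have hA := h.of_fromBlocks₁₁
  have : Invertible A := hA.isUnit.invertible
  refine ((PosDef.fromBlocks₁₁ B D hA).mp h.posSemidef).posDef_iff_det_ne_zero.mpr ?_
  have hdet := h.det_pos.ne'
  rw [det_fromBlocks₁₁, invOf_eq_nonsing_inv] at hdet
  exact right_ne_zero_of_mul hdet

theorem Matrix.sumElim_dotProduct_nonsing_inv_fromBlocks_mulVec {α m n : Type*} [CommRing α]
    [Fintype m] [Fintype n] [DecidableEq m] [DecidableEq n]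
    {A : Matrix m m α} (B : Matrix m n α) (D : Matrix n n α) (hAs : A.IsSymm)
    (hA : IsUnit A.det) (hS : IsUnit (D - Bᵀ * A⁻¹ * B).det) (u : m → α) (v : n → α) :
    Sum.elim u v ⬝ᵥ ((fromBlocks A B Bᵀ D)⁻¹ *ᵥ Sum.elim u v) =
      u ⬝ᵥ (A⁻¹ *ᵥ u) +
        (v - (Bᵀ * A⁻¹) *ᵥ u) ⬝ᵥ ((D - Bᵀ * A⁻¹ * B)⁻¹ *ᵥ (v - (Bᵀ * A⁻¹) *ᵥ u)) := by
  set S := D - Bᵀ * A⁻¹ * B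
  set w := v - (Bᵀ * A⁻¹) *ᵥ u
  set s := S⁻¹ *ᵥ w
  have hSs : D *ᵥ s - (Bᵀ * A⁻¹ * B) *ᵥ s = w := by
    rw [← sub_mulVec, mulVec_mulVec, mul_nonsing_inv _ hS, one_mulVec]
  have : Invertible (fromBlocks A B Bᵀ D) := by
    refine invertibleOfIsUnitDet _ ?_
    have := invertibleOfIsUnitDet A hA
    rw [det_fromBlocks₁₁, invOf_eq_nonsing_inv]
    exact hA.mul hS
  have hsolve : (fromBlocks A B Bᵀ D)⁻¹ *ᵥ Sum.elim u v = Sum.elim (A⁻¹ *ᵥ (u - B *ᵥ s)) s := by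
    refine inv_mulVec_eq_vec ?_
    rw [fromBlocks_mulVec, Sum.elim_comp_inl, Sum.elim_comp_inr, mulVec_mulVec,
      mul_nonsing_inv _ hA, one_mulVec, sub_add_cancel, mulVec_mulVec, mulVec_sub,
      mulVec_mulVec, sub_add_comm, hSs, sub_add_cancel]
  have hsymm : u ⬝ᵥ (A⁻¹ *ᵥ (B *ᵥ s)) = ((Bᵀ * A⁻¹) *ᵥ u) ⬝ᵥ s := by
    rw [mulVec_mulVec, dotProduct_mulVec, ← vecMul_transpose, transpose_mul, transpose_transpose,
      hAs.inv.eq]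
  rw [hsolve, sumElim_dotProduct_sumElim, mulVec_sub, dotProduct_sub, hsymm]
  simp only [w, sub_dotProduct]
  ring

theorem Matrix.one_add_inv_mul_dotProduct_inv_smul_mulVec {K n : Type*} [Field K] [Fintype n]
    [DecidableEq n] {S : Matrix n n K} (hS : IsUnit S.det) {q ν : K} (hq : q ≠ 0) (hν : ν ≠ 0)
    (w : n → K) :
    1 + ν⁻¹ * (w ⬝ᵥ (((q / ν) • S)⁻¹ *ᵥ w)) = (q + w ⬝ᵥ (S⁻¹ *ᵥ w)) / q := by
  have := invertibleOfNonzero (div_ne_zero hq hν)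
  rw [inv_smul _ _ hS, invOf_eq_inv, smul_mulVec, dotProduct_smul, smul_eq_mul]
  field_simp

theorem angular_gaussian_conditional_is_student_general
    (d₁ d₂ : ℕ) (hd₁ : 1 ≤ d₁)
    (A : Matrix (Fin d₁) (Fin d₁) ℝ) (B : Matrix (Fin d₁) (Fin d₂) ℝ)
    (D : Matrix (Fin d₂) (Fin d₂) ℝ)
    (hSg : (Matrix.fromBlocks A B Bᵀ D).PosDef)
    (Bnorm : ℝ) (hBnorm : 0 < Bnorm)
    (μ₁ x₁ : Fin d₁ → ℝ) (μ₂ : Fin d₂ → ℝ) (hx₁ : x₁ ≠ μ₁)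
    (f : (Fin d₁ ⊕ Fin d₂ → ℝ) → ℝ)
    (hf : ∀ x : Fin d₁ ⊕ Fin d₂ → ℝ, f x =
      Bnorm * (Matrix.fromBlocks A B Bᵀ D).det ^ (-(1:ℝ)/2) *
        ((x - Sum.elim μ₁ μ₂) ⬝ᵥ
          ((Matrix.fromBlocks A B Bᵀ D)⁻¹ *ᵥ (x - Sum.elim μ₁ μ₂))) ^
            (-((d₁ : ℝ) + d₂) / 2))
    (q₁ : ℝ) (hq₁ : q₁ = (x₁ - μ₁) ⬝ᵥ (A⁻¹ *ᵥ (x₁ - μ₁)))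
    (μcond : Fin d₂ → ℝ) (hμcond : μcond = μ₂ + (Bᵀ * A⁻¹) *ᵥ (x₁ - μ₁))
    (Scond : Matrix (Fin d₂) (Fin d₂) ℝ)
    (hScond : Scond = (q₁ / d₁) • (D - Bᵀ * A⁻¹ * B)) :
    ∃ c : ℝ, 0 < c ∧ ∀ x₂ : Fin d₂ → ℝ,
      f (Sum.elim x₁ x₂) =
        c * (D - Bᵀ * A⁻¹ * B).det ^ (-(1:ℝ)/2) *
          (1 + ((d₁ : ℝ))⁻¹ * ((x₂ - μcond) ⬝ᵥ (Scond⁻¹ *ᵥ (x₂ - μcond)))) ^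
            (-(((d₁ : ℝ)) + d₂) / 2) := by
  have hA : A.PosDef := hSg.of_fromBlocks₁₁
  have hS : (D - Bᵀ * A⁻¹ * B).PosDef := by
    rw [← conjTranspose_eq_transpose_of_trivial] at hSg ⊢
    exact hSg.schurComplement_of_fromBlocks
  have hq₁pos : 0 < q₁ := by
    simpa [hq₁] using hA.inv.dotProduct_mulVec_pos (sub_ne_zero.mpr hx₁)
  have hd₁pos : (0 : ℝ) < d₁ := by exact_mod_cast hd₁
  have hdetA := hA.det_pos
  have hdetS := hS.det_pos
  set e := -((d₁ : ℝ) + d₂) / 2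
  refine ⟨Bnorm * A.det ^ (-(1:ℝ)/2) * q₁ ^ e, by positivity, fun x₂ => ?_⟩
  have : Invertible A := hA.isUnit.invertible
  have hAsymm : A.IsSymm := isHermitian_iff_isSymm.mp hA.isHermitian
  have hw : x₂ - μ₂ - (Bᵀ * A⁻¹) *ᵥ (x₁ - μ₁) = x₂ - μcond := by
    rw [hμcond, sub_sub]
  have hQ : 0 ≤ (x₂ - μcond) ⬝ᵥ ((D - Bᵀ * A⁻¹ * B)⁻¹ *ᵥ (x₂ - μcond)) := by
    simpa using hS.inv.posSemidef.dotProduct_mulVec_nonneg (x₂ - μcond)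
  rw [hf, ← Sum.elim_sub_sub, sumElim_dotProduct_nonsing_inv_fromBlocks_mulVec B D hAsymm
    hdetA.ne'.isUnit hdetS.ne'.isUnit, hw, ← hq₁, hScond,
    one_add_inv_mul_dotProduct_inv_smul_mulVec hdetS.ne'.isUnit hq₁pos.ne' hd₁pos.ne',
    det_fromBlocks₁₁, invOf_eq_nonsing_inv, Real.mul_rpow hdetA.le hdetS.le,
    Real.div_rpow (by positivity) hq₁pos.le]
  field_simp

/-- The conditional density of x₂ given x₁ under the Angular
Gaussian AG_d(μ,Σ) is proportional, as a function of x₂, to the multivariate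
t-density with ν = d₁ degrees of freedom, location μ₂.₁ = μ₂ + Σ₂₁Σ₁₁⁻¹(x₁-μ₁)
and scale matrix (q₁/d₁)·Σ₂₂.₁, where q₁ = (x₁-μ₁)ᵀΣ₁₁⁻¹(x₁-μ₁). -/
theorem angular_gaussian_conditional_is_student
    (d₁ d₂ : ℕ) (hd₁ : 1 ≤ d₁) (hd₂ : 1 ≤ d₂)
    (A : Matrix (Fin d₁) (Fin d₁) ℝ) (B : Matrix (Fin d₁) (Fin d₂) ℝ)
    (D : Matrix (Fin d₂) (Fin d₂) ℝ)
    (hSg : (Matrix.fromBlocks A B Bᵀ D).PosDef)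
    (Bnorm : ℝ) (hBnorm : 0 < Bnorm)
    (μ₁ x₁ : Fin d₁ → ℝ) (μ₂ : Fin d₂ → ℝ) (hx₁ : x₁ ≠ μ₁)
    (f : (Fin d₁ ⊕ Fin d₂ → ℝ) → ℝ)
    (hf : ∀ x : Fin d₁ ⊕ Fin d₂ → ℝ, f x =
      Bnorm * (Matrix.fromBlocks A B Bᵀ D).det ^ (-(1:ℝ)/2) *
        ((x - Sum.elim μ₁ μ₂) ⬝ᵥ
          ((Matrix.fromBlocks A B Bᵀ D)⁻¹ *ᵥ (x - Sum.elim μ₁ μ₂))) ^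
            (-((d₁ : ℝ) + d₂) / 2))
    (q₁ : ℝ) (hq₁ : q₁ = (x₁ - μ₁) ⬝ᵥ (A⁻¹ *ᵥ (x₁ - μ₁)))
    (μcond : Fin d₂ → ℝ) (hμcond : μcond = μ₂ + (Bᵀ * A⁻¹) *ᵥ (x₁ - μ₁))
    (Scond : Matrix (Fin d₂) (Fin d₂) ℝ)
    (hScond : Scond = (q₁ / d₁) • (D - Bᵀ * A⁻¹ * B)) :
    ∃ c : ℝ, 0 < c ∧ ∀ x₂ : Fin d₂ → ℝ,
      f (Sum.elim x₁ x₂) =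
        c * (D - Bᵀ * A⁻¹ * B).det ^ (-(1:ℝ)/2) *
          (1 + ((d₁ : ℝ))⁻¹ * ((x₂ - μcond) ⬝ᵥ (Scond⁻¹ *ᵥ (x₂ - μcond)))) ^
            (-(((d₁ : ℝ)) + d₂) / 2) :=
  angular_gaussian_conditional_is_student_general d₁ d₂ hd₁ A B D hSg Bnorm hBnorm μ₁ x₁ μ₂ hx₁ f hf
    q₁ hq₁ μcond hμcond Scond hScond
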